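/- Under the homotopy CGM for affinely constrained problems with exact linear minimization oracle, for every k ≥ 1 the iterate x_{k+1} satisfies the three bounds: (i) f(x_{k+1}) − f⋆ ≥ −‖y⋆‖ · dist(A x_{k+1}, K); (ii) f(x_{k+1}) − f⋆ ≤ 2 D² ( L_f/(k+1) + ‖A‖²/(β₀ √(k+1)) ); (iii) dist(A x_{k+1}, K) ≤ (2 β₀ / √(k+1)) ( ‖y⋆‖ + D √(C₀/β₀) ), where C₀ = L_f + ‖A‖²/β₀. -/

import Mathlib

/-!
The update is a Frank–Wolfe step on the smoothed objective
`F_β x = f x + dist (A x) K ^ 2 / (2 β)`, which is `(L_f + ‖A‖² / β)`-smooth with gradient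
`β⁻¹ • v`, where `v = β • ∇f x + Aᵀ (A x - proj_K (A x))` is the direction handed to the oracle.
Comparing the oracle's answer with a feasible minimiser `x⋆`, convexity of `f` and the obtuse-angle
property of the projection give, for the gap `e_k = F_{β_k} (x_{k+1}) - f⋆`, the recursion
`e_k ≤ (1 - η_k) e_{k-1} + η_k² (L_f + ‖A‖² / β_k) D² / 2`; the change of weight from `β_{k-1}`
to `β_k` is absorbed because `(1 - 2 η_k) / β_k ≤ (1 - η_k) / β_{k-1}` for `β_k = β₀ / √(k+1)`.
Induction on `k (k+1) e_k` bounds `e_k`, which gives (ii) as the penalty is nonnegative. The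
multiplier `y⋆` gives (i), and inserting (i) into the bound on `e_k` leaves a quadratic inequality
in `dist (A x_{k+1}) K` whose solution is (iii).
-/

open RealInnerProductSpace

section SmoothConvex

variable {E : Type*} [NormedAddCommGroup E] [InnerProductSpace ℝ E] [CompleteSpace E]
  {f : E → ℝ}

lemma HasGradientAt.hasDerivAt_add_smul {g a v : E} {t : ℝ}
    (h : HasGradientAt f g (a + t • v)) :
    HasDerivAt (fun s : ℝ => f (a + s • v)) ⟪g, v⟫ t := by
  have hline : HasDerivAt (fun s : ℝ => a + s • v) v t := by
    simpa using ((hasDerivAt_id t).smul_const v).const_add a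
  have := h.hasFDerivAt.comp_hasDerivAt t hline
  simp only [InnerProductSpace.toDual_apply_apply] at this
  exact this

lemma ConvexOn.inner_gradient_le_sub (hf : ConvexOn ℝ Set.univ f) {g a : E}
    (h : HasGradientAt f g a) (b : E) : ⟪g, b - a⟫ ≤ f b - f a := by
  have hline : ConvexOn ℝ Set.univ (fun t : ℝ => f (a + t • (b - a))) := by
    have := hf.comp_affineMap (AffineMap.lineMap a b)
    rw [Set.preimage_univ] at this
    refine this.congr fun t _ => ?_
    simp [AffineMap.lineMap_apply, add_comm]
  have hd : HasDerivAt (fun t : ℝ => f (a + t • (b - a))) ⟪g, b - a⟫ 0 :=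
    HasGradientAt.hasDerivAt_add_smul (by simpa using h)
  simpa [slope_def_field] using
    hline.le_slope_of_hasDerivAt (Set.mem_univ 0) (Set.mem_univ 1) one_pos hd

lemma le_add_inner_gradient_add_sq {f' : E → E} {L : ℝ} (hf : ∀ x, HasGradientAt f (f' x) x)
    (hlip : ∀ x y, ‖f' x - f' y‖ ≤ L * ‖x - y‖) (a b : E) :
    f b ≤ f a + ⟪f' a, b - a⟫ + L * ‖b - a‖ ^ 2 / 2 := by
  set v := b - a
  let φ : ℝ → ℝ := fun t => f (a + t • v) - t * ⟪f' a, v⟫ - L * ‖v‖ ^ 2 / 2 * t ^ 2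
  have hφ (t : ℝ) : HasDerivAt φ (⟪f' (a + t • v) - f' a, v⟫ - L * ‖v‖ ^ 2 * t) t := by
    refine ((((hf (a + t • v)).hasDerivAt_add_smul).sub ((hasDerivAt_id t).mul_const _)).sub
      ((hasDerivAt_pow 2 t).const_mul (L * ‖v‖ ^ 2 / 2))).congr_deriv ?_
    simp only [inner_sub_left, one_mul]
    ring
  have hφ_nonpos (t : ℝ) (ht : t ∈ interior (Set.Icc (0 : ℝ) 1)) :
      ⟪f' (a + t • v) - f' a, v⟫ - L * ‖v‖ ^ 2 * t ≤ 0 := by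
    rw [interior_Icc] at ht
    rw [sub_nonpos]
    have hlip_t : ‖f' (a + t • v) - f' a‖ ≤ L * (t * ‖v‖) := by
      simpa [norm_smul, abs_of_pos ht.1] using hlip (a + t • v) a
    calc ⟪f' (a + t • v) - f' a, v⟫ ≤ ‖f' (a + t • v) - f' a‖ * ‖v‖ := real_inner_le_norm _ _
      _ ≤ L * (t * ‖v‖) * ‖v‖ := mul_le_mul_of_nonneg_right hlip_t (norm_nonneg v)
      _ = L * ‖v‖ ^ 2 * t := by ring
  have hanti : AntitoneOn φ (Set.Icc 0 1) :=
    antitoneOn_of_hasDerivWithinAt_nonpos (convex_Icc 0 1)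
      (HasDerivAt.continuousOn fun t _ => hφ t) (fun t _ => (hφ t).hasDerivWithinAt) hφ_nonpos
  have := hanti (Set.left_mem_Icc.2 zero_le_one) (Set.right_mem_Icc.2 zero_le_one) zero_le_one
  simp only [φ, v, zero_smul, add_zero, one_smul, add_sub_cancel] at this
  linarith

end SmoothConvex

section MetricProjection

def IsMetricProjection {G : Type*} [PseudoMetricSpace G] (K : Set G) (P : G → G) : Prop :=
  ∀ z, P z ∈ K ∧ ∀ y ∈ K, dist z (P z) ≤ dist z y

lemma IsMetricProjection.infDist_eq {G : Type*} [PseudoMetricSpace G] {K : Set G} {P : G → G}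
    (hP : IsMetricProjection K P) (z : G) : Metric.infDist z K = dist z (P z) :=
  le_antisymm (Metric.infDist_le_dist_of_mem (hP z).1)
    ((Metric.le_infDist ⟨_, (hP z).1⟩).2 (hP z).2)

variable {G : Type*} [NormedAddCommGroup G] [InnerProductSpace ℝ G] {K : Set G} {P : G → G}

lemma IsMetricProjection.inner_le_zero (hP : IsMetricProjection K P) (hK : Convex ℝ K) (z : G)
    {u : G} (hu : u ∈ K) : ⟪z - P z, u - P z⟫ ≤ 0 := by
  refine (norm_eq_iInf_iff_real_inner_le_zero hK (hP z).1).1 ?_ u hu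
  rw [← dist_eq_norm, ← hP.infDist_eq, Metric.infDist_eq_iInf]
  simp only [dist_eq_norm]

lemma IsMetricProjection.norm_sub_sq_le (hP : IsMetricProjection K P) (w z : G) :
    ‖w - P w‖ ^ 2 ≤ ‖z - P z‖ ^ 2 + 2 * ⟪z - P z, w - z⟫ + ‖w - z‖ ^ 2 := by
  have h : ‖w - P w‖ ≤ ‖w - P z‖ := by simpa [dist_eq_norm] using (hP w).2 _ (hP z).1
  calc ‖w - P w‖ ^ 2 ≤ ‖(z - P z) + (w - z)‖ ^ 2 := by
        rw [show (z - P z) + (w - z) = w - P z by abel]; gcongr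
    _ = _ := norm_add_sq_real _ _

lemma IsMetricProjection.neg_mul_infDist_le (hP : IsMetricProjection K P) {a b : ℝ} {y z : G}
    (h : a ≤ b + ⟪y, z - P z⟫) : -(‖y‖ * Metric.infDist z K) ≤ b - a := by
  rw [hP.infDist_eq, dist_eq_norm]
  linarith [real_inner_le_norm y (z - P z)]

end MetricProjection

lemma sub_three_mul_sqrt_add_one_le {t : ℝ} (ht : 1 ≤ t) :
    (t - 3) * √(t + 1) ≤ (t - 1) * √t := by
  rcases le_or_gt t 3 with h | h
  · nlinarith [Real.sqrt_nonneg (t + 1), Real.sqrt_nonneg t]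
  · rw [← Real.sqrt_sq (by linarith : 0 ≤ t - 3), ← Real.sqrt_sq (by linarith : 0 ≤ t - 1),
      ← Real.sqrt_mul (sq_nonneg _), ← Real.sqrt_mul (sq_nonneg _)]
    exact Real.sqrt_le_sqrt (by nlinarith)

lemma homotopy_schedule_le {β₀ t : ℝ} (hβ₀ : 0 < β₀) (ht : 1 ≤ t) :
    (1 - 2 * (2 / (t + 1))) / (β₀ / √(t + 1)) ≤ (1 - 2 / (t + 1)) / (β₀ / √t) := by
  have h1 : 0 < √(t + 1) := Real.sqrt_pos.2 (by linarith)
  have h2 : 0 < √t := Real.sqrt_pos.2 (by linarith)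
  rw [show (1 - 2 * (2 / (t + 1))) / (β₀ / √(t + 1)) = (t - 3) * √(t + 1) / ((t + 1) * β₀) by
      field_simp; ring,
    show (1 - 2 / (t + 1)) / (β₀ / √t) = (t - 1) * √t / ((t + 1) * β₀) by field_simp; ring]
  exact div_le_div_of_nonneg_right (sub_three_mul_sqrt_add_one_le ht) (by positivity)

section SmoothedObjective

variable {E G : Type*} [NormedAddCommGroup E] [InnerProductSpace ℝ E] [CompleteSpace E]
  [NormedAddCommGroup G] [InnerProductSpace ℝ G] [CompleteSpace G]
  {f : E → ℝ} {f' : E → E} {A : E →L[ℝ] G} {K : Set G} {P : G → G}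

variable (f A P) in
noncomputable def smoothedObjective (β : ℝ) (x : E) : ℝ := f x + ‖A x - P (A x)‖ ^ 2 / (2 * β)

lemma smoothedObjective_le_add_inner_add_sq {L β : ℝ} (hβ : 0 < β) (hP : IsMetricProjection K P)
    (hf : ∀ x, HasGradientAt f (f' x) x) (hlip : ∀ x y, ‖f' x - f' y‖ ≤ L * ‖x - y‖) (x y : E) :
    smoothedObjective f A P β y ≤ smoothedObjective f A P β x
      + β⁻¹ * ⟪β • f' x + A.adjoint (A x - P (A x)), y - x⟫
      + (L + ‖A‖ ^ 2 / β) * ‖y - x‖ ^ 2 / 2 := by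
  have hA : ‖A (y - x)‖ ^ 2 ≤ ‖A‖ ^ 2 * ‖y - x‖ ^ 2 := by
    rw [← mul_pow]; gcongr; exact A.le_opNorm _
  have hpen : ‖A y - P (A y)‖ ^ 2 ≤ ‖A x - P (A x)‖ ^ 2
      + 2 * ⟪A.adjoint (A x - P (A x)), y - x⟫ + ‖A‖ ^ 2 * ‖y - x‖ ^ 2 := by
    rw [A.adjoint_inner_left, map_sub]
    rw [map_sub] at hA
    linarith [hP.norm_sub_sq_le (A y) (A x)]
  calc smoothedObjective f A P β y
      ≤ (f x + ⟪f' x, y - x⟫ + L * ‖y - x‖ ^ 2 / 2) + (‖A x - P (A x)‖ ^ 2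
          + 2 * ⟪A.adjoint (A x - P (A x)), y - x⟫ + ‖A‖ ^ 2 * ‖y - x‖ ^ 2) / (2 * β) := by
        unfold smoothedObjective
        gcongr
        exact le_add_inner_gradient_add_sq hf hlip x y
    _ = _ := by
        unfold smoothedObjective
        rw [inner_add_left, real_inner_smul_left]
        field_simp
        ring

lemma inner_le_sub_smoothedObjective {β : ℝ} (hβ : 0 < β) (hf_cvx : ConvexOn ℝ Set.univ f)
    (hf : ∀ x, HasGradientAt f (f' x) x) (hP : IsMetricProjection K P) (hK : Convex ℝ K)
    (x : E) {xs : E} (hxs : A xs ∈ K) :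
    β⁻¹ * ⟪β • f' x + A.adjoint (A x - P (A x)), xs - x⟫
      ≤ f xs - smoothedObjective f A P β x - ‖A x - P (A x)‖ ^ 2 / (2 * β) := by
  have hgrad := hf_cvx.inner_gradient_le_sub (hf x) xs
  have hpen : ⟪A.adjoint (A x - P (A x)), xs - x⟫ ≤ -‖A x - P (A x)‖ ^ 2 := by
    rw [A.adjoint_inner_left, map_sub,
      show A xs - A x = (A xs - P (A x)) - (A x - P (A x)) by abel, inner_sub_right,
      real_inner_self_eq_norm_sq]
    linarith [hP.inner_le_zero hK (A x) hxs]
  have hpen' := mul_le_mul_of_nonneg_left hpen (inv_nonneg.2 hβ.le)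
  unfold smoothedObjective
  rw [inner_add_left, real_inner_smul_left, mul_add, ← mul_assoc, inv_mul_cancel₀ hβ.ne', one_mul]
  have hsplit : β⁻¹ * -‖A x - P (A x)‖ ^ 2
      = -(‖A x - P (A x)‖ ^ 2 / (2 * β)) - ‖A x - P (A x)‖ ^ 2 / (2 * β) := by
    field_simp; ring
  linarith

lemma smoothedObjective_step_le {L D η β β' : ℝ} (hf_cvx : ConvexOn ℝ Set.univ f)
    (hf : ∀ x, HasGradientAt f (f' x) x) (hL : 0 ≤ L)
    (hlip : ∀ x y, ‖f' x - f' y‖ ≤ L * ‖x - y‖) (hP : IsMetricProjection K P) (hK : Convex ℝ K)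
    (hη : 0 ≤ η) (hβ : 0 < β) (hββ' : (1 - 2 * η) / β ≤ (1 - η) / β')
    {x s xs : E} (hxs : A xs ∈ K)
    (hlmo : ⟪β • f' x + A.adjoint (A x - P (A x)), s⟫
      ≤ ⟪β • f' x + A.adjoint (A x - P (A x)), xs⟫)
    (hsD : ‖s - x‖ ≤ D) :
    smoothedObjective f A P β (x + η • (s - x)) - f xs
      ≤ (1 - η) * (smoothedObjective f A P β' x - f xs)
        + η ^ 2 * ((L + ‖A‖ ^ 2 / β) * D ^ 2) / 2 := by
  set v := β • f' x + A.adjoint (A x - P (A x))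
  set q := ‖A x - P (A x)‖ ^ 2
  have hup := smoothedObjective_le_add_inner_add_sq (A := A) hβ hP hf hlip x (x + η • (s - x))
  rw [add_sub_cancel_left, real_inner_smul_right, norm_smul, mul_pow, Real.norm_of_nonneg hη] at hup
  have hdir : β⁻¹ * ⟪v, s - x⟫ ≤ f xs - smoothedObjective f A P β x - q / (2 * β) := by
    refine le_trans ?_ (inner_le_sub_smoothedObjective hβ hf_cvx hf hP hK x hxs)
    gcongr
    rw [inner_sub_right, inner_sub_right]
    linarith
  have hsched : (1 - 2 * η) * (q / (2 * β)) ≤ (1 - η) * (q / (2 * β')) := by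
    calc (1 - 2 * η) * (q / (2 * β)) = (1 - 2 * η) / β * (q / 2) := by ring
      _ ≤ (1 - η) / β' * (q / 2) := by gcongr
      _ = (1 - η) * (q / (2 * β')) := by ring
  have hC : 0 ≤ L + ‖A‖ ^ 2 / β := by positivity
  have hdiam : (L + ‖A‖ ^ 2 / β) * (η ^ 2 * ‖s - x‖ ^ 2) ≤ (L + ‖A‖ ^ 2 / β) * (η ^ 2 * D ^ 2) := by
    gcongr
  have hdir' := mul_le_mul_of_nonneg_left hdir hη
  unfold smoothedObjective at hup hdir' ⊢
  linarith

lemma smoothedObjective_homotopy_step_le {L D β₀ t : ℝ} (hf_cvx : ConvexOn ℝ Set.univ f)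
    (hf : ∀ x, HasGradientAt f (f' x) x) (hL : 0 ≤ L)
    (hlip : ∀ x y, ‖f' x - f' y‖ ≤ L * ‖x - y‖) (hP : IsMetricProjection K P) (hK : Convex ℝ K)
    (hβ₀ : 0 < β₀) (ht : 1 ≤ t) {x s xs : E} (hxs : A xs ∈ K)
    (hlmo : ⟪(β₀ / √(t + 1)) • f' x + A.adjoint (A x - P (A x)), s⟫
      ≤ ⟪(β₀ / √(t + 1)) • f' x + A.adjoint (A x - P (A x)), xs⟫)
    (hsD : ‖s - x‖ ≤ D) :
    smoothedObjective f A P (β₀ / √(t + 1)) (x + (2 / (t + 1)) • (s - x)) - f xs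
      ≤ (1 - 2 / (t + 1)) * (smoothedObjective f A P (β₀ / √t) x - f xs)
        + (2 / (t + 1)) ^ 2 * ((L + ‖A‖ ^ 2 / (β₀ / √(t + 1))) * D ^ 2) / 2 :=
  smoothedObjective_step_le hf_cvx hf hL hlip hP hK (by positivity)
    (div_pos hβ₀ (Real.sqrt_pos.2 (by linarith))) (homotopy_schedule_le hβ₀ ht) hxs hlmo hsD

end SmoothedObjective

lemma le_two_mul_div_of_le_one_sub_two_div {e c : ℕ → ℝ} (hc : Monotone c) (hc₀ : 0 ≤ c 0)
    (h : ∀ k : ℕ, e (k + 1) ≤ (1 - 2 / ((k + 1 : ℕ) + 1 : ℝ)) * e k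
      + (2 / ((k + 1 : ℕ) + 1 : ℝ)) ^ 2 * c (k + 1) / 2)
    {k : ℕ} (hk : 1 ≤ k) : e k ≤ 2 * c k / (k + 1) := by
  have key : ∀ k : ℕ, (k : ℝ) * (k + 1) * e k ≤ 2 * k * c k := by
    intro k
    induction k with
    | zero => simp
    | succ k ih =>
      have hk := h k
      push_cast at hk ⊢
      have hck : c k ≤ c (k + 1) := hc k.le_succ
      have hc1 : 0 ≤ c (k + 1) := hc₀.trans (hc (Nat.zero_le _))
      have hmul := mul_le_mul_of_nonneg_left hk (by positivity : (0 : ℝ) ≤ (k + 1) * (k + 1 + 1))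
      have hrw : ((k : ℝ) + 1) * (k + 1 + 1) * ((1 - 2 / ((k : ℝ) + 1 + 1)) * e k
          + (2 / ((k : ℝ) + 1 + 1)) ^ 2 * c (k + 1) / 2)
          = k * (k + 1) * e k + 2 * (k + 1) / (k + 1 + 1) * c (k + 1) := by
        field_simp; ring
      have hfrac : 2 * ((k : ℝ) + 1) / (k + 1 + 1) * c (k + 1) ≤ 2 * c (k + 1) := by
        gcongr
        rw [div_le_iff₀ (by positivity)]; linarith
      have hck' := mul_le_mul_of_nonneg_left hck (by positivity : (0 : ℝ) ≤ 2 * k)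
      rw [hrw] at hmul
      linarith
  have hk' : (0 : ℝ) < k := by exact_mod_cast hk
  rw [le_div_iff₀ (by positivity)]
  exact le_of_mul_le_mul_left (by linarith [key k] : (k : ℝ) * (e k * (k + 1)) ≤ k * (2 * c k)) hk'

lemma le_of_homotopy_recursion {e : ℕ → ℝ} {L a D β₀ : ℝ} (hL : 0 ≤ L) (ha : 0 ≤ a)
    (hβ₀ : 0 < β₀)
    (h : ∀ k : ℕ, e (k + 1) ≤ (1 - 2 / ((k + 1 : ℕ) + 1 : ℝ)) * e k
      + (2 / ((k + 1 : ℕ) + 1 : ℝ)) ^ 2 * ((L + a / (β₀ / √((k + 1 : ℕ) + 1 : ℝ))) * D ^ 2) / 2)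
    {k : ℕ} (hk : 1 ≤ k) : e k ≤ 2 * D ^ 2 * (L / (k + 1) + a / (β₀ * √((k : ℝ) + 1))) := by
  have hc : Monotone fun k : ℕ => (L + a / (β₀ / √((k : ℝ) + 1))) * D ^ 2 := fun i j hij => by
    dsimp only
    gcongr
  have hsqrt : 0 < √((k : ℝ) + 1) := by positivity
  convert le_two_mul_div_of_le_one_sub_two_div hc (by positivity) h hk using 1
  field_simp
  linear_combination (-a * D ^ 2) * Real.sq_sqrt (by positivity : (0 : ℝ) ≤ k + 1)

lemma le_add_of_sq_le_mul_add_sq {t b c : ℝ} (hb : 0 ≤ b) (hc : 0 ≤ c) (h : t ^ 2 ≤ b * t + c ^ 2) :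
    t ≤ b + c := by
  nlinarith

lemma le_of_add_sq_div_le {g t y L a D β₀ s : ℝ} (hβ₀ : 0 < β₀) (hs : 0 ≤ s) (hL : 0 ≤ L)
    (ha : 0 ≤ a) (hy : 0 ≤ y) (hD : 0 ≤ D) (hlow : -(y * t) ≤ g)
    (hup : g + t ^ 2 / (2 * (β₀ / √(s + 1))) ≤ 2 * D ^ 2 * (L / (s + 1) + a / (β₀ * √(s + 1)))) :
    t ≤ 2 * β₀ / √(s + 1) * (y + D * √((L + a / β₀) / β₀)) := by
  set r := √(s + 1)
  have hr : 1 ≤ r := Real.one_le_sqrt.2 (by linarith)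
  have hr2 : r ^ 2 = s + 1 := Real.sq_sqrt (by linarith)
  have hC : √((L + a / β₀) / β₀) ^ 2 = (L + a / β₀) / β₀ := Real.sq_sqrt (by positivity)
  set b := 2 * β₀ / r
  have hb : 0 < b := by positivity
  have hL' : L / (s + 1) ≤ L / r := by
    rw [← hr2]; exact div_le_div_of_nonneg_left hL (by positivity) (by nlinarith)
  have hsq : t ^ 2 ≤ b * y * t + (b * (D * √((L + a / β₀) / β₀))) ^ 2 := by
    have hpen : t ^ 2 / b ≤ 2 * D ^ 2 * (L / r + a / (β₀ * r)) + y * t := by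
      have : t ^ 2 / b = t ^ 2 / (2 * (β₀ / r)) := by simp only [b]; ring
      rw [this]
      have := mul_le_mul_of_nonneg_left hL' (by positivity : 0 ≤ 2 * D ^ 2)
      linarith
    have hrhs : b * (2 * D ^ 2 * (L / r + a / (β₀ * r)))
        = (b * (D * √((L + a / β₀) / β₀))) ^ 2 := by
      rw [mul_pow, mul_pow, hC]
      simp only [b]
      field_simp
    have := mul_le_mul_of_nonneg_left hpen hb.le
    rw [mul_add, hrhs, mul_div_cancel₀ _ hb.ne'] at this
    linarith
  have := le_add_of_sq_le_mul_add_sq (by positivity) (by positivity) hsq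
  linarith

lemma frankWolfe_iterate_mem {E : Type*} [AddCommGroup E] [Module ℝ E] {X : Set E}
    (hX : Convex ℝ X) {x s : ℕ → E} (hx1 : x 1 ∈ X) (hs : ∀ k, 1 ≤ k → s k ∈ X)
    (hupd : ∀ k, 1 ≤ k → x (k + 1) = x k + (2 / ((k : ℝ) + 1)) • (s k - x k)) :
    ∀ k, 1 ≤ k → x k ∈ X := by
  intro k hk
  induction k, hk using Nat.le_induction with
  | base => exact hx1
  | succ k hk ih =>
    rw [hupd k hk]
    refine hX.add_smul_sub_mem ih (hs k hk) ⟨by positivity, ?_⟩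
    rw [div_le_one (by positivity)]
    exact_mod_cast Nat.succ_le_succ hk

theorem stmt3_general
    (n d : ℕ)
    (X : Set (EuclideanSpace ℝ (Fin n)))
    (hX_cpt : IsCompact X) (hX_cvx : Convex ℝ X)
    (f : EuclideanSpace ℝ (Fin n) → ℝ)
    (f' : EuclideanSpace ℝ (Fin n) → EuclideanSpace ℝ (Fin n))
    (hf_cvx : ConvexOn ℝ Set.univ f)
    (hf_grad : ∀ x, HasGradientAt f (f' x) x)
    (L_f : ℝ) (hLf : 0 ≤ L_f)
    (hf'_lip : ∀ x y, ‖f' x - f' y‖ ≤ L_f * ‖x - y‖)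
    (A : EuclideanSpace ℝ (Fin n) →L[ℝ] EuclideanSpace ℝ (Fin d))
    (K : Set (EuclideanSpace ℝ (Fin d)))
    (hK_cvx : Convex ℝ K)
    (projK : EuclideanSpace ℝ (Fin d) → EuclideanSpace ℝ (Fin d))
    (hprojK : ∀ z, projK z ∈ K ∧ ∀ y ∈ K, dist z (projK z) ≤ dist z y)
    (fstar : ℝ)
    (hfstar : IsLeast (f '' {x | x ∈ X ∧ A x ∈ K}) fstar)
    (ystar : EuclideanSpace ℝ (Fin d))
    (hystar : ∀ x ∈ X, ∀ r ∈ K, fstar ≤ f x + ⟪ystar, A x - r⟫)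
    (β₀ : ℝ) (hβ₀ : 0 < β₀)
    (x s v : ℕ → EuclideanSpace ℝ (Fin n))
    (hx1 : x 1 ∈ X)
    (hv : ∀ k, 1 ≤ k → v k = (β₀ / Real.sqrt ((k:ℝ) + 1)) • f' (x k)
        + (ContinuousLinearMap.adjoint A) (A (x k) - projK (A (x k))))
    (hs_mem : ∀ k, 1 ≤ k → s k ∈ X)
    (hlmo : ∀ k, 1 ≤ k → ∀ z ∈ X, ⟪v k, s k⟫ ≤ ⟪v k, z⟫)
    (hupd : ∀ k, 1 ≤ k → x (k + 1) = x k + (2 / ((k:ℝ) + 1)) • (s k - x k)) :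
    ∀ k, 1 ≤ k →
      f (x (k + 1)) - fstar ≥ -(‖ystar‖ * Metric.infDist (A (x (k + 1))) K) ∧
      f (x (k + 1)) - fstar
        ≤ 2 * (Metric.diam X) ^ 2
            * (L_f / ((k:ℝ) + 1) + ‖A‖ ^ 2 / (β₀ * Real.sqrt ((k:ℝ) + 1))) ∧
      Metric.infDist (A (x (k + 1))) K
        ≤ (2 * β₀ / Real.sqrt ((k:ℝ) + 1))
            * (‖ystar‖ + Metric.diam X * Real.sqrt ((L_f + ‖A‖ ^ 2 / β₀) / β₀)) := by
  have hP : IsMetricProjection K projK := hprojK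
  obtain ⟨xs, ⟨hxsX, hxsK⟩, rfl⟩ := hfstar.1
  have hxX := frankWolfe_iterate_mem hX_cvx hx1 hs_mem hupd
  set e : ℕ → ℝ := fun k => smoothedObjective f A projK (β₀ / √((k : ℝ) + 1)) (x (k + 1)) - f xs
  have hrec : ∀ k : ℕ, e (k + 1) ≤ (1 - 2 / ((k + 1 : ℕ) + 1 : ℝ)) * e k
      + (2 / ((k + 1 : ℕ) + 1 : ℝ)) ^ 2
        * ((L_f + ‖A‖ ^ 2 / (β₀ / √((k + 1 : ℕ) + 1 : ℝ))) * Metric.diam X ^ 2) / 2 := by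
    intro k
    have hk : 1 ≤ k + 1 := Nat.le_add_left 1 k
    have hlmo' := hlmo (k + 1) hk xs hxsX
    rw [hv (k + 1) hk] at hlmo'
    have hsD : ‖s (k + 1) - x (k + 1)‖ ≤ Metric.diam X := by
      rw [← dist_eq_norm]
      exact Metric.dist_le_diam_of_mem hX_cpt.isBounded (hs_mem _ hk) (hxX _ hk)
    have := smoothedObjective_homotopy_step_le hf_cvx hf_grad hLf hf'_lip hP hK_cvx hβ₀
      (by exact_mod_cast hk) hxsK hlmo' hsD
    simp only [e, hupd (k + 1) hk]
    push_cast at this ⊢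
    exact this
  intro k hk
  have hgap := le_of_homotopy_recursion hLf (sq_nonneg _) hβ₀ hrec hk
  have hlow := hP.neg_mul_infDist_le (hystar _ (hxX (k + 1) (by omega)) _ (hP _).1)
  have hup : f (x (k + 1)) - f xs + Metric.infDist (A (x (k + 1))) K ^ 2
      / (2 * (β₀ / √((k : ℝ) + 1))) ≤ 2 * Metric.diam X ^ 2
        * (L_f / ((k : ℝ) + 1) + ‖A‖ ^ 2 / (β₀ * √((k : ℝ) + 1))) := by
    rw [hP.infDist_eq, dist_eq_norm]
    simp only [e, smoothedObjective] at hgap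
    linarith
  have hpen : 0 ≤ Metric.infDist (A (x (k + 1))) K ^ 2 / (2 * (β₀ / √((k : ℝ) + 1))) := by
    positivity
  exact ⟨hlow, by linarith, le_of_add_sq_div_le hβ₀ k.cast_nonneg hLf (sq_nonneg _)
    (norm_nonneg _) Metric.diam_nonneg hlow hup⟩

theorem stmt3
    (n d : ℕ)
    (X : Set (EuclideanSpace ℝ (Fin n)))
    (hX_ne : X.Nonempty) (hX_cpt : IsCompact X) (hX_cvx : Convex ℝ X)
    (f : EuclideanSpace ℝ (Fin n) → ℝ)
    (f' : EuclideanSpace ℝ (Fin n) → EuclideanSpace ℝ (Fin n))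
    (hf_cvx : ConvexOn ℝ Set.univ f)
    (hf_grad : ∀ x, HasGradientAt f (f' x) x)
    (L_f : ℝ) (hLf : 0 ≤ L_f)
    (hf'_lip : ∀ x y, ‖f' x - f' y‖ ≤ L_f * ‖x - y‖)
    (A : EuclideanSpace ℝ (Fin n) →L[ℝ] EuclideanSpace ℝ (Fin d))
    (K : Set (EuclideanSpace ℝ (Fin d)))
    (hK_ne : K.Nonempty) (hK_cl : IsClosed K) (hK_cvx : Convex ℝ K)
    (projK : EuclideanSpace ℝ (Fin d) → EuclideanSpace ℝ (Fin d))
    (hprojK : ∀ z, projK z ∈ K ∧ ∀ y ∈ K, dist z (projK z) ≤ dist z y)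
    (fstar : ℝ)
    (hfstar : IsLeast (f '' {x | x ∈ X ∧ A x ∈ K}) fstar)
    (ystar : EuclideanSpace ℝ (Fin d))
    (hystar : ∀ x ∈ X, ∀ r ∈ K, fstar ≤ f x + ⟪ystar, A x - r⟫)
    (β₀ : ℝ) (hβ₀ : 0 < β₀)
    (x s v : ℕ → EuclideanSpace ℝ (Fin n))
    (hx1 : x 1 ∈ X)
    (hv : ∀ k, 1 ≤ k → v k = (β₀ / Real.sqrt ((k:ℝ) + 1)) • f' (x k)
        + (ContinuousLinearMap.adjoint A) (A (x k) - projK (A (x k))))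
    (hs_mem : ∀ k, 1 ≤ k → s k ∈ X)
    (hlmo : ∀ k, 1 ≤ k → ∀ z ∈ X, ⟪v k, s k⟫ ≤ ⟪v k, z⟫)
    (hupd : ∀ k, 1 ≤ k → x (k + 1) = x k + (2 / ((k:ℝ) + 1)) • (s k - x k)) :
    ∀ k, 1 ≤ k →
      f (x (k + 1)) - fstar ≥ -(‖ystar‖ * Metric.infDist (A (x (k + 1))) K) ∧
      f (x (k + 1)) - fstar
        ≤ 2 * (Metric.diam X) ^ 2
            * (L_f / ((k:ℝ) + 1) + ‖A‖ ^ 2 / (β₀ * Real.sqrt ((k:ℝ) + 1))) ∧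
      Metric.infDist (A (x (k + 1))) K
        ≤ (2 * β₀ / Real.sqrt ((k:ℝ) + 1))
            * (‖ystar‖ + Metric.diam X * Real.sqrt ((L_f + ‖A‖ ^ 2 / β₀) / β₀)) :=
  stmt3_general n d X hX_cpt hX_cvx f f' hf_cvx hf_grad L_f hLf hf'_lip A K hK_cvx projK hprojK
    fstar hfstar ystar hystar β₀ hβ₀ x s v hx1 hv hs_mem hlmo hupd
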